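/- arXiv:2104.01061 — 6 statements merged into one kernel-verified Lean document; each statement's English description precedes it below -/
import Mathlib

section
/- Let X be a finite set, Θ ⊆ ℝ^m open, and θ ↦ p_θ a twice continuously differentiable family of strictly positive probability distributions on X. Fix α > 0, α ≠ 1. Then for all i, j and all θ ∈ Θ, the Eguchi metric of the I_α-divergence equals the escort covariance of the score: −(∂/∂θ'_j)(∂/∂θ_i) I_α(p_θ, p_{θ'}) evaluated at θ' = θ equals Cov_{p_θ^{(α)}}[∂_i log p_θ(X), ∂_j log p_θ(X)]. -/
open scoped BigOperators Topology Matrix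
open Real MeasureTheory

noncomputable section

/-- Expectation of `A` under the weight/distribution `p` on a finite set. -/
def expct {X : Type*} [Fintype X] (p A : X → ℝ) : ℝ := ∑ x, p x * A x

/-- Covariance of `A` and `B` under `p`. -/
def covf {X : Type*} [Fintype X] (p A B : X → ℝ) : ℝ :=
  (∑ x, p x * A x * B x) - (∑ x, p x * A x) * (∑ x, p x * B x)

/-- Variance of `A` under `p`: `E_p[(A - E_p A)^2]`. -/
def varE {X : Type*} [Fintype X] (p A : X → ℝ) : ℝ :=
  ∑ x, p x * (A x - expct p A) ^ 2

/-- The α-escort distribution of `p`. -/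
def escort {X : Type*} [Fintype X] (α : ℝ) (p : X → ℝ) : X → ℝ :=
  fun x => p x ^ α / ∑ y, p y ^ α

/-- Partial derivative in the `i`-th coordinate direction. -/
def pderiv {m : ℕ} (i : Fin m) (f : (Fin m → ℝ) → ℝ) (θ : Fin m → ℝ) : ℝ :=
  fderiv ℝ f θ (Pi.single i 1)

/-- Covariance matrix of a vector-valued map `A` under `p`. -/
def covMatrix {X : Type*} [Fintype X] {m : ℕ} (p : X → ℝ) (A : X → Fin m → ℝ) :
    Matrix (Fin m) (Fin m) ℝ :=
  Matrix.of fun i j => covf p (fun x => A x i) (fun x => A x j)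

/-- The α-information matrix `G^{(α)}(θ)`. -/
def Galpha {X : Type*} [Fintype X] {m : ℕ} (α : ℝ) (p : (Fin m → ℝ) → X → ℝ)
    (θ : Fin m → ℝ) : Matrix (Fin m) (Fin m) ℝ :=
  Matrix.of fun i j =>
    covf (escort α (p θ)) (fun x => pderiv i (fun t => Real.log (p t x)) θ)
      (fun x => pderiv j (fun t => Real.log (p t x)) θ)

/-- The I_α-divergence (relative α-entropy). -/
def Ialpha {X : Type*} [Fintype X] (α : ℝ) (p q : X → ℝ) : ℝ :=
  (1 / (1 - α)) * Real.log (∑ x, p x * q x ^ (α - 1))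
    + (1 / α) * Real.log (∑ x, q x ^ α)
    - (1 / (α * (1 - α))) * Real.log (∑ x, p x ^ α)

/-- Generalized KL-divergence between positive measures on a finite set. -/
def genKL {X : Type*} [Fintype X] (pt qt : X → ℝ) : ℝ :=
  ∑ x, pt x * Real.log (pt x / qt x) - ∑ x, pt x + ∑ x, qt x

/-- The Fisher information matrix `G^{(e)}(θ)`. -/
def GeMat {X : Type*} [Fintype X] {k : ℕ} (p : (Fin k → ℝ) → X → ℝ) (θ : Fin k → ℝ) :
    Matrix (Fin k) (Fin k) ℝ :=
  Matrix.of fun i j =>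
    ∑ x, p θ x * pderiv i (fun t => Real.log (p t x)) θ * pderiv j (fun t => Real.log (p t x)) θ

/-- The prior matrix `J^λ(θ)` with entries `∂_i log λ · ∂_j log λ`. -/
def Jmat {k : ℕ} (lam : (Fin k → ℝ) → ℝ) (θ : Fin k → ℝ) : Matrix (Fin k) (Fin k) ℝ :=
  Matrix.of fun i j =>
    pderiv i (fun t => Real.log (lam t)) θ * pderiv j (fun t => Real.log (lam t)) θ

/-- The generalized Fisher matrix `G^{(f,F)}(θ)` of the escort model. -/
def GFF {X : Type*} [Fintype X] {k : ℕ} (F : ℝ → ℝ) (p : (Fin k → ℝ) → X → ℝ)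
    (θ : Fin k → ℝ) : Matrix (Fin k) (Fin k) ℝ :=
  Matrix.of fun i j =>
    ∑ x, F (p θ x) * pderiv i (fun t => Real.log (F (p t x))) θ
      * pderiv j (fun t => Real.log (F (p t x))) θ

/-- The generalized f-divergence `D_f^{(F)}(p,q)`. -/
def genDiv {X : Type*} [Fintype X] (f F : ℝ → ℝ) (p q : X → ℝ) : ℝ :=
  (1 / deriv (deriv f) 1) * ∑ x, F (q x) * f (F (p x) / F (q x))

/-- The Bayesian I_α-divergence between `λ·p` and `μ·q`. -/
def IalphaB {X : Type*} [Fintype X] (α lam mu : ℝ) (p q : X → ℝ) : ℝ :=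
  lam * Ialpha α p q + lam * Real.log (lam / mu) - lam + mu

/-- The open-simplex parametrization of distributions on a set with `d+1` points. -/
def simplexFam (d : ℕ) (θ : Fin d → ℝ) : Fin (d + 1) → ℝ :=
  fun x => if h : (x : ℕ) < d then θ ⟨x, h⟩ else 1 - ∑ i, θ i

/-!
The cross term of `I_α(p_t, p_θ')` is the log-sum-exp of `log p_t + (α - 1) log p_θ'`; the other
two terms depend on only one of `t`, `θ'` and do not contribute to the mixed derivative. The
`t`-derivative of log-sum-exp is the expectation of the score `∂ log p_t` under the softmax of its
argument, and differentiating that expectation in `θ'` produces `(α - 1)` times a covariance under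
the same softmax. At `θ' = t = θ` the softmax of `α log p_θ` is the escort distribution `p_θ^{(α)}`,
and the factor `(α - 1)` cancels against `1 / (1 - α)` up to the sign.
-/

def softmax {X : Type*} [Fintype X] (y : X → ℝ) : X → ℝ :=
  fun x => exp (y x) / ∑ x', exp (y x')

theorem covf_eq_sum_mul_sub {X : Type*} [Fintype X] (σ a b : X → ℝ) :
    covf σ a b = ∑ x, σ x * a x * (b x - ∑ x', σ x' * b x') := by
  simp only [covf, mul_sub, Finset.sum_sub_distrib, Finset.sum_mul]

theorem covf_const_mul_right {X : Type*} [Fintype X] (σ a b : X → ℝ) (c : ℝ) :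
    covf σ a (fun x => c * b x) = c * covf σ a b := by
  have h₁ : ∀ x, σ x * a x * (c * b x) = c * (σ x * a x * b x) := fun x => by ring
  have h₂ : ∀ x, σ x * (c * b x) = c * (σ x * b x) := fun x => by ring
  simp only [covf, h₁, h₂, ← Finset.mul_sum]
  ring

theorem escort_eq_softmax {X : Type*} [Fintype X] (α : ℝ) {P : X → ℝ} (hP : ∀ x, 0 < P x) :
    escort α P = softmax (fun x => α * log (P x)) := by
  have hexp : ∀ x, P x ^ α = exp (α * log (P x)) := fun x => by
    rw [rpow_def_of_pos (hP x), mul_comm]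
  ext x
  simp only [escort, softmax, hexp]

theorem Ialpha_eq_log_sum_exp {X : Type*} [Fintype X] (α : ℝ) {P Q : X → ℝ}
    (hP : ∀ x, 0 < P x) (hQ : ∀ x, 0 < Q x) :
    Ialpha α P Q =
      (1 / (1 - α)) * log (∑ x, exp (log (P x) + (α - 1) * log (Q x)))
        + (1 / α) * log (∑ x, exp (α * log (Q x)))
        - (1 / (α * (1 - α))) * log (∑ x, exp (α * log (P x))) := by
  have hexp : ∀ {R : X → ℝ}, (∀ x, 0 < R x) → ∀ β x, R x ^ β = exp (β * log (R x)) :=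
    fun hR β x => by rw [rpow_def_of_pos (hR x), mul_comm]
  simp only [Ialpha, hexp hP, hexp hQ, exp_add, exp_log (hP _)]

section Differentiation

variable {E : Type*} [NormedAddCommGroup E] [NormedSpace ℝ E] {X : Type*} [Fintype X]
  {y : E → X → ℝ} {Y : X → E →L[ℝ] ℝ} {θ : E}

theorem hasFDerivAt_log_sum_exp (hy : ∀ x, HasFDerivAt (y · x) (Y x) θ) :
    HasFDerivAt (fun t => log (∑ x, exp (y t x))) (∑ x, softmax (y θ) x • Y x) θ := by
  cases isEmpty_or_nonempty X
  · simpa using hasFDerivAt_const (0 : ℝ) θ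
  have hZ : 0 < ∑ x, exp (y θ x) := Finset.sum_pos (fun x _ => exp_pos _) Finset.univ_nonempty
  convert (HasFDerivAt.fun_sum fun x _ => (hy x).exp).log hZ.ne' using 1
  simp only [softmax, Finset.smul_sum, smul_smul, div_eq_inv_mul]

theorem softmax_eq_exp_sub_log_sum_exp (z : X → ℝ) (x : X) :
    softmax z x = exp (z x - log (∑ x', exp (z x'))) := by
  have hZ : 0 < ∑ x', exp (z x') := Finset.sum_pos (fun x _ => exp_pos _) ⟨x, Finset.mem_univ x⟩
  rw [softmax, exp_sub, exp_log hZ]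

theorem hasFDerivAt_softmax (hy : ∀ x, HasFDerivAt (y · x) (Y x) θ) (x : X) :
    HasFDerivAt (fun t => softmax (y t) x)
      (softmax (y θ) x • (Y x - ∑ x', softmax (y θ) x' • Y x')) θ := by
  convert ((hy x).fun_sub (hasFDerivAt_log_sum_exp hy)).exp using 1
  · exact funext fun t => softmax_eq_exp_sub_log_sum_exp (y t) x
  · rw [softmax_eq_exp_sub_log_sum_exp]

theorem hasFDerivAt_expct_softmax (hy : ∀ x, HasFDerivAt (y · x) (Y x) θ) (a : X → ℝ) :
    HasFDerivAt (fun t => expct (softmax (y t)) a)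
      (∑ x, (softmax (y θ) x * a x) • (Y x - ∑ x', softmax (y θ) x' • Y x')) θ := by
  refine (HasFDerivAt.fun_sum fun x _ => (hasFDerivAt_softmax hy x).mul_const (a x)).congr_fderiv
    (Finset.sum_congr rfl fun x _ => ?_)
  rw [smul_smul, mul_comm]

theorem fderiv_Ialpha_fst {α : ℝ} {p : E → X → ℝ} {q : X → ℝ}
    (hpos : ∀ᶠ t in 𝓝 θ, ∀ x, 0 < p t x) (hq : ∀ x, 0 < q x)
    (hdiff : ∀ x, DifferentiableAt ℝ (fun t => log (p t x)) θ) (v : E) :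
    fderiv ℝ (fun t => Ialpha α (p t) q) θ v =
      1 / (1 - α) * expct (softmax fun x => log (p θ x) + (α - 1) * log (q x))
          (fun x => fderiv ℝ (fun t => log (p t x)) θ v)
        - 1 / (α * (1 - α)) * expct (softmax fun x => α * log (p θ x))
          (fun x => α * fderiv ℝ (fun t => log (p t x)) θ v) := by
  have hL := fun x => (hdiff x).hasFDerivAt
  have hsplit : (fun t => Ialpha α (p t) q) =ᶠ[𝓝 θ] fun t =>
      (1 / (1 - α)) * log (∑ x, exp (log (p t x) + (α - 1) * log (q x)))
        + (1 / α) * log (∑ x, exp (α * log (q x)))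
        - (1 / (α * (1 - α))) * log (∑ x, exp (α * log (p t x))) :=
    hpos.mono fun t ht => Ialpha_eq_log_sum_exp α ht hq
  have hderiv :=
    (((hasFDerivAt_log_sum_exp fun x => (hL x).add_const ((α - 1) * log (q x))).const_mul
      (1 / (1 - α))).add_const ((1 / α) * log (∑ x, exp (α * log (q x))))).fun_sub
      ((hasFDerivAt_log_sum_exp fun x => (hL x).const_mul α).const_mul (1 / (α * (1 - α))))
  rw [hsplit.fderiv_eq, hderiv.fderiv]
  simp only [sub_apply, smul_apply, sum_apply, smul_eq_mul, expct]

theorem neg_fderiv_fderiv_Ialpha {α : ℝ} (hα1 : α ≠ 1) {p : E → X → ℝ}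
    (hpos : ∀ᶠ t in 𝓝 θ, ∀ x, 0 < p t x)
    (hdiff : ∀ x, DifferentiableAt ℝ (fun t => log (p t x)) θ) (v w : E) :
    -fderiv ℝ (fun θ' => fderiv ℝ (fun t => Ialpha α (p t) (p θ')) θ v) θ w =
      covf (escort α (p θ)) (fun x => fderiv ℝ (fun t => log (p t x)) θ v)
        (fun x => fderiv ℝ (fun t => log (p t x)) θ w) := by
  set L : X → E →L[ℝ] ℝ := fun x => fderiv ℝ (fun t => log (p t x)) θ
  have hy : ∀ x, HasFDerivAt (fun θ' => log (p θ x) + (α - 1) * log (p θ' x))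
      ((α - 1) • L x) θ :=
    fun x => (((hdiff x).hasFDerivAt).const_mul _).const_add _
  have houter :=
    ((hasFDerivAt_expct_softmax hy fun x => L x v).const_mul (1 / (1 - α))).sub_const
      (1 / (α * (1 - α)) * expct (softmax fun x => α * log (p θ x)) (fun x => α * L x v))
  have hσ : softmax (fun x => log (p θ x) + (α - 1) * log (p θ x)) = escort α (p θ) := by
    rw [escort_eq_softmax α hpos.self_of_nhds]
    congr 1
    ext x
    ring
  rw [Filter.EventuallyEq.fderiv_eq (hpos.mono fun θ' hθ' => fderiv_Ialpha_fst hpos hθ' hdiff v),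
    houter.fderiv]
  simp only [hσ, smul_apply, sum_apply, sub_apply, smul_eq_mul]
  rw [← covf_eq_sum_mul_sub (escort α (p θ)) (fun x => L x v) (fun x => (α - 1) * L x w),
    covf_const_mul_right]
  have h1α : 1 - α ≠ 0 := sub_ne_zero.mpr hα1.symm
  field_simp
  ring

end Differentiation

theorem eguchi_metric_Ialpha_general {X : Type*} [Fintype X] {m : ℕ}
    (Θ : Set (Fin m → ℝ)) (hΘ : IsOpen Θ)
    (p : (Fin m → ℝ) → X → ℝ)
    (hsmooth : ∀ x, ContDiffOn ℝ 2 (fun θ => p θ x) Θ)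
    (hpos : ∀ θ ∈ Θ, ∀ x, 0 < p θ x)
    (α : ℝ) (hα1 : α ≠ 1) :
    ∀ θ ∈ Θ, ∀ i j : Fin m,
      -(pderiv j (fun θ' => pderiv i (fun t => Ialpha α (p t) (p θ')) θ) θ)
        = covf (escort α (p θ)) (fun x => pderiv i (fun t => Real.log (p t x)) θ)
            (fun x => pderiv j (fun t => Real.log (p t x)) θ) := by
  intro θ hθ i j
  have hdiff : ∀ x, DifferentiableAt ℝ (fun t => log (p t x)) θ := fun x =>
    (((hsmooth x).differentiableOn (by norm_num)).differentiableAt (hΘ.mem_nhds hθ)).log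
      (hpos θ hθ x).ne'
  exact neg_fderiv_fderiv_Ialpha hα1 (Filter.eventually_of_mem (hΘ.mem_nhds hθ) hpos) hdiff _ _

/-- the Eguchi metric of the I_α-divergence is the escort covariance
of the score. -/
theorem eguchi_metric_Ialpha {X : Type*} [Fintype X] {m : ℕ}
    (Θ : Set (Fin m → ℝ)) (hΘ : IsOpen Θ)
    (p : (Fin m → ℝ) → X → ℝ)
    (hsmooth : ∀ x, ContDiffOn ℝ 2 (fun θ => p θ x) Θ)
    (hpos : ∀ θ ∈ Θ, ∀ x, 0 < p θ x)
    (hsum : ∀ θ ∈ Θ, ∑ x, p θ x = 1)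
    (α : ℝ) (hα : 0 < α) (hα1 : α ≠ 1) :
    ∀ θ ∈ Θ, ∀ i j : Fin m,
      -(pderiv j (fun θ' => pderiv i (fun t => Ialpha α (p t) (p θ')) θ) θ)
        = covf (escort α (p θ)) (fun x => pderiv i (fun t => Real.log (p t x)) θ)
            (fun x => pderiv j (fun t => Real.log (p t x)) θ) :=
  eguchi_metric_Ialpha_general Θ hΘ p hsmooth hpos α hα1
end
end

section
/- Let X be a finite set, Θ ⊆ ℝ^m open, and θ ↦ p_θ a continuously differentiable family of strictly positive probability distributions on X. Fix α > 0. Then for all i, j and all θ ∈ Θ, Cov_{p_θ^{(α)}}[∂_i log p_θ(X), ∂_j log p_θ(X)] = (1/α²) · Cov_{p_θ^{(α)}}[∂_i log p_θ^{(α)}(X), ∂_j log p_θ^{(α)}(X)]; that is, the α-information matrix of the family equals 1/α² times the Fisher information matrix of the escort family S^{(α)} = {p_θ^{(α)}}. -/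
open scoped BigOperators Topology Matrix
open Real MeasureTheory

noncomputable section

/-! Taking logarithms, `log p^{(α)}_θ(x) = α log p_θ(x) - log ∑_y p_θ(y)^α`, so every score
`∂_i log p^{(α)}_θ` is an affine image of `∂_i log p_θ` with slope `α` and an intercept that does not
depend on `x`. Covariance under a probability distribution ignores intercepts and scales by the
product of the slopes, which gives the factor `α²`. -/

section Escort

variable {X : Type*} [Fintype X]

lemma covf_mul_sub_mul_sub (q A B : X → ℝ) (a b c d : ℝ) (hq : ∑ x, q x = 1) :
    covf q (fun x => a * A x - c) (fun x => b * B x - d) = a * b * covf q A B := by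
  have hAB : ∑ x, q x * (a * A x - c) * (b * B x - d)
      = a * b * ∑ x, q x * A x * B x - a * d * ∑ x, q x * A x
        - b * c * ∑ x, q x * B x + c * d * ∑ x, q x := by
    simp only [Finset.mul_sum, ← Finset.sum_sub_distrib, ← Finset.sum_add_distrib]
    exact Finset.sum_congr rfl fun x _ => by ring
  have hA : ∑ x, q x * (a * A x - c) = a * ∑ x, q x * A x - c * ∑ x, q x := by
    simp only [Finset.mul_sum, ← Finset.sum_sub_distrib]
    exact Finset.sum_congr rfl fun x _ => by ring
  have hB : ∑ x, q x * (b * B x - d) = b * ∑ x, q x * B x - d * ∑ x, q x := by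
    simp only [Finset.mul_sum, ← Finset.sum_sub_distrib]
    exact Finset.sum_congr rfl fun x _ => by ring
  rw [covf, covf, hAB, hA, hB, hq]
  ring

lemma sum_rpow_pos [Nonempty X] {p : X → ℝ} (hp : ∀ x, 0 < p x) (α : ℝ) :
    0 < ∑ x, p x ^ α :=
  Finset.sum_pos (fun x _ => Real.rpow_pos_of_pos (hp x) α) Finset.univ_nonempty

lemma sum_escort_eq_one [Nonempty X] {p : X → ℝ} (hp : ∀ x, 0 < p x) (α : ℝ) :
    ∑ x, escort α p x = 1 := by
  simp only [escort]
  rw [← Finset.sum_div, div_self (sum_rpow_pos hp α).ne']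

lemma log_escort {p : X → ℝ} (hp : ∀ x, 0 < p x) (α : ℝ) (x : X) :
    Real.log (escort α p x) = α * Real.log (p x) - Real.log (∑ y, p y ^ α) := by
  have : Nonempty X := ⟨x⟩
  rw [escort, Real.log_div (Real.rpow_pos_of_pos (hp x) α).ne' (sum_rpow_pos hp α).ne',
    Real.log_rpow (hp x)]

lemma pderiv_log_escort {m : ℕ} {p : (Fin m → ℝ) → X → ℝ} {θ : Fin m → ℝ}
    (hpos : ∀ᶠ t in 𝓝 θ, ∀ x, 0 < p t x) (hdiff : ∀ x, DifferentiableAt ℝ (fun t => p t x) θ)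
    (α : ℝ) (i : Fin m) (x : X) :
    pderiv i (fun t => Real.log (escort α (p t) x)) θ
      = α * pderiv i (fun t => Real.log (p t x)) θ
        - pderiv i (fun t => Real.log (∑ y, p t y ^ α)) θ := by
  have hpθ : ∀ y, 0 < p θ y := hpos.self_of_nhds
  have hlogp : DifferentiableAt ℝ (fun t => Real.log (p t x)) θ :=
    (hdiff x).log (hpθ x).ne'
  have : Nonempty X := ⟨x⟩
  have hlogS : DifferentiableAt ℝ (fun t => Real.log (∑ y, p t y ^ α)) θ :=
    (DifferentiableAt.fun_sum fun y _ => (hdiff y).rpow_const (Or.inl (hpθ y).ne')).log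
      (sum_rpow_pos hpθ α).ne'
  have hlog : (fun t => Real.log (escort α (p t) x))
      =ᶠ[𝓝 θ] fun t => α * Real.log (p t x) - Real.log (∑ y, p t y ^ α) :=
    hpos.mono fun t ht => log_escort ht α x
  simp only [pderiv, hlog.fderiv_eq, fderiv_fun_sub (hlogp.const_mul α) hlogS,
    fderiv_const_mul hlogp α, sub_apply, smul_apply,
    smul_eq_mul]

end Escort

theorem alpha_metric_eq_escort_fisher_general {X : Type*} [Fintype X] {m : ℕ}
    (Θ : Set (Fin m → ℝ)) (hΘ : IsOpen Θ)
    (p : (Fin m → ℝ) → X → ℝ)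
    (hsmooth : ∀ x, ContDiffOn ℝ 1 (fun θ => p θ x) Θ)
    (hpos : ∀ θ ∈ Θ, ∀ x, 0 < p θ x)
    (α : ℝ) (hα : 0 < α) :
    ∀ θ ∈ Θ, ∀ i j : Fin m,
      covf (escort α (p θ)) (fun x => pderiv i (fun t => Real.log (p t x)) θ)
          (fun x => pderiv j (fun t => Real.log (p t x)) θ)
        = (1 / α ^ 2) *
          covf (escort α (p θ))
            (fun x => pderiv i (fun t => Real.log (escort α (p t) x)) θ)
            (fun x => pderiv j (fun t => Real.log (escort α (p t) x)) θ) := by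
  intro θ hθ i j
  rcases isEmpty_or_nonempty X with _ | _
  · simp [covf]
  have hnhds : Θ ∈ 𝓝 θ := hΘ.mem_nhds hθ
  have hdiff : ∀ x, DifferentiableAt ℝ (fun t => p t x) θ := fun x =>
    ((hsmooth x).differentiableOn one_ne_zero).differentiableAt hnhds
  have hpos' : ∀ᶠ t in 𝓝 θ, ∀ x, 0 < p t x := Filter.mem_of_superset hnhds hpos
  simp only [pderiv_log_escort hpos' hdiff]
  rw [covf_mul_sub_mul_sub _ _ _ _ _ _ _ (sum_escort_eq_one (hpos θ hθ) α)]
  field_simp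

/-- the α-information matrix is 1/α² times the Fisher information of
the escort family. -/
theorem alpha_metric_eq_escort_fisher {X : Type*} [Fintype X] {m : ℕ}
    (Θ : Set (Fin m → ℝ)) (hΘ : IsOpen Θ)
    (p : (Fin m → ℝ) → X → ℝ)
    (hsmooth : ∀ x, ContDiffOn ℝ 1 (fun θ => p θ x) Θ)
    (hpos : ∀ θ ∈ Θ, ∀ x, 0 < p θ x)
    (hsum : ∀ θ ∈ Θ, ∑ x, p θ x = 1)
    (α : ℝ) (hα : 0 < α) :
    ∀ θ ∈ Θ, ∀ i j : Fin m,
      covf (escort α (p θ)) (fun x => pderiv i (fun t => Real.log (p t x)) θ)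
          (fun x => pderiv j (fun t => Real.log (p t x)) θ)
        = (1 / α ^ 2) *
          covf (escort α (p θ))
            (fun x => pderiv i (fun t => Real.log (escort α (p t) x)) θ)
            (fun x => pderiv j (fun t => Real.log (escort α (p t) x)) θ) :=
  alpha_metric_eq_escort_fisher_general Θ hΘ p hsmooth hpos α hα
end
end

section
/- Let X = {a_1, …, a_{d+1}} be a finite set with d+1 elements and let P be the open simplex of strictly positive probability distributions on X, parametrized by the coordinates θ_i := p(a_i), i = 1, …, d (so p(a_{d+1}) = 1 − θ_1 − ⋯ − θ_d). Fix α > 0 and assume the d×d α-information matrix G^{(α)}(θ) in these coordinates is positive definite. Then for every A : X → ℝ and every p = p_θ ∈ P, Var_{p^{(α)}}[(p/p^{(α)})(A − E_p[A])] = (∇_θ E_{p_θ}[A])^T (G^{(α)}(θ))^{-1} (∇_θ E_{p_θ}[A]), where ∇_θ E_{p_θ}[A] is the gradient of the map θ ↦ E_{p_θ}[A]. -/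
open scoped BigOperators Topology Matrix
open Real MeasureTheory

noncomputable section

/-!
On the open simplex the scores `∂ᵢ log p_θ`, together with the constants, span all functions
on `X`; so `f := (p / p^{(α)}) (A - E_p[A])` is `c + ∑ⱼ mⱼ ∂ⱼ log p_θ` for some `c` and `m`.
Since `p^{(α)} f = p (A - E_p[A])`, the function `f` is centred under `p^{(α)}` and
`Cov_{p^{(α)}}[∂ᵢ log p_θ, f] = ∑ₓ ∂ᵢ p_θ(x) A(x) = ∂ᵢ E_{p_θ}[A]`, because `∑ₓ ∂ᵢ p_θ(x) = 0`.
Bilinearity of the covariance then gives `G^{(α)} m = ∇E[A]` and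
`Var[f] = m ⬝ ∇E[A] = ∇E[A]ᵀ (G^{(α)})⁻¹ ∇E[A]`.
-/

section Moments

variable {X : Type*} [Fintype X]

lemma covf_comm (p A B : X → ℝ) : covf p A B = covf p B A := by
  simp only [covf, mul_right_comm _ (A _), mul_comm (∑ x, p x * A x)]

lemma varE_eq_covf {p : X → ℝ} (hp : ∑ x, p x = 1) (A : X → ℝ) : varE p A = covf p A A := by
  set E := expct p A
  have hexpand : varE p A = ∑ x, p x * A x * A x - 2 * E * ∑ x, p x * A x + E ^ 2 * ∑ x, p x := by
    rw [varE, Finset.mul_sum, Finset.mul_sum, ← Finset.sum_sub_distrib, ← Finset.sum_add_distrib]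
    exact Finset.sum_congr rfl fun x _ => by ring
  rw [hexpand, hp, covf, show ∑ x, p x * A x = E from rfl]
  ring

lemma covf_const_add_dotProduct {n : ℕ} {p : X → ℝ} (hp : ∑ x, p x = 1) (B : X → ℝ) (c : ℝ)
    (m : Fin n → ℝ) (s : X → Fin n → ℝ) :
    covf p B (fun x => c + m ⬝ᵥ s x) = ∑ j, m j * covf p B (fun x => s x j) := by
  simp only [covf, dotProduct, mul_add, Finset.mul_sum, Finset.sum_add_distrib, ← Finset.sum_mul,
    hp, one_mul, add_sub_add_left_eq_sub, mul_sub, Finset.sum_sub_distrib]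
  rw [Finset.sum_comm (f := fun x i => p x * B x * (m i * s x i)),
    Finset.sum_comm (f := fun x i => (∑ y, p y * B y) * (p x * (m i * s x i)))]
  congr 1 <;> exact Finset.sum_congr rfl fun j _ => Finset.sum_congr rfl fun x _ => by ring

lemma covMatrix_mulVec {n : ℕ} {p : X → ℝ} (hp : ∑ x, p x = 1) (s : X → Fin n → ℝ) (c : ℝ)
    (m : Fin n → ℝ) (i : Fin n) :
    (covMatrix p s *ᵥ m) i = covf p (fun x => s x i) (fun x => c + m ⬝ᵥ s x) := by
  rw [covf_const_add_dotProduct hp, Matrix.mulVec, dotProduct]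
  exact Finset.sum_congr rfl fun j _ => mul_comm _ _

theorem varE_eq_dotProduct_covMatrix_inv_mulVec {n : ℕ} {q : X → ℝ} (hq : ∑ x, q x = 1)
    {s : X → Fin n → ℝ} (hs : IsUnit (covMatrix q s).det) {f : X → ℝ} {c : ℝ} {m : Fin n → ℝ}
    (hf : f = fun x => c + m ⬝ᵥ s x) {w : Fin n → ℝ} (hw : ∀ i, covf q (fun x => s x i) f = w i) :
    varE q f = w ⬝ᵥ (covMatrix q s)⁻¹ *ᵥ w := by
  have hGm : covMatrix q s *ᵥ m = w := funext fun i => by rw [covMatrix_mulVec hq s c, ← hf, hw]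
  rw [← hGm, Matrix.mulVec_mulVec, Matrix.nonsing_inv_mul _ hs, Matrix.one_mulVec, hGm,
    varE_eq_covf hq]
  nth_rw 2 [hf]
  rw [covf_const_add_dotProduct hq, dotProduct_comm]
  exact Finset.sum_congr rfl fun j _ => by rw [covf_comm, hw]

end Moments

section Calculus

variable {m : ℕ}

lemma pderiv_log {g : (Fin m → ℝ) → ℝ} {θ : Fin m → ℝ} (hg : DifferentiableAt ℝ g θ)
    (h0 : g θ ≠ 0) (i : Fin m) :
    pderiv i (fun t => Real.log (g t)) θ = pderiv i g θ / g θ := by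
  simp [pderiv, fderiv.log hg h0, div_eq_inv_mul]

variable {X : Type*} [Fintype X] {p : (Fin m → ℝ) → X → ℝ} {θ : Fin m → ℝ}

lemma pderiv_expct (hp : ∀ x, DifferentiableAt ℝ (fun t => p t x) θ) (A : X → ℝ) (i : Fin m) :
    pderiv i (fun t => expct (p t) A) θ = expct (fun x => pderiv i (fun t => p t x) θ) A := by
  simp only [pderiv, expct]
  rw [fderiv_fun_sum fun x _ => (hp x).mul_const (A x)]
  simp [fderiv_mul_const (hp _), mul_comm]

lemma sum_pderiv_eq_zero (hp : ∀ x, DifferentiableAt ℝ (fun t => p t x) θ)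
    (hsum : ∀ᶠ t in 𝓝 θ, ∑ x, p t x = 1) (i : Fin m) :
    ∑ x, pderiv i (fun t => p t x) θ = 0 := by
  have h := pderiv_expct hp (fun _ => 1) i
  simp only [expct, mul_one] at h
  rw [← h, pderiv, Filter.EventuallyEq.fderiv_eq hsum]
  simp

theorem covf_pderiv_log_eq_pderiv_expct {q : X → ℝ}
    (hp : ∀ x, DifferentiableAt ℝ (fun t => p t x) θ) (hsum : ∀ᶠ t in 𝓝 θ, ∑ x, p t x = 1)
    (hp0 : ∀ x, p θ x ≠ 0) (hq0 : ∀ x, q x ≠ 0) (A : X → ℝ) (i : Fin m) :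
    covf q (fun x => pderiv i (fun t => Real.log (p t x)) θ)
        (fun x => p θ x / q x * (A x - expct (p θ) A))
      = pderiv i (fun t => expct (p t) A) θ := by
  set E := expct (p θ) A
  have hmean : ∑ x, q x * (p θ x / q x * (A x - E)) = 0 := by
    calc ∑ x, q x * (p θ x / q x * (A x - E)) = ∑ x, p θ x * A x - E * ∑ x, p θ x := by
          rw [Finset.mul_sum, ← Finset.sum_sub_distrib]
          exact Finset.sum_congr rfl fun x _ => by field_simp [hq0 x]
      _ = 0 := by rw [hsum.self_of_nhds, mul_one]; exact sub_self E
  have hcross : ∑ x, q x * pderiv i (fun t => Real.log (p t x)) θ * (p θ x / q x * (A x - E))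
      = pderiv i (fun t => expct (p t) A) θ := by
    calc _ = ∑ x, pderiv i (fun t => p t x) θ * A x - E * ∑ x, pderiv i (fun t => p t x) θ := by
          rw [Finset.mul_sum, ← Finset.sum_sub_distrib]
          refine Finset.sum_congr rfl fun x _ => ?_
          rw [pderiv_log (hp x) (hp0 x)]
          field_simp [hq0 x, hp0 x]
      _ = _ := by rw [sum_pderiv_eq_zero hp hsum, mul_zero, sub_zero, pderiv_expct hp]; rfl
  rw [covf, hmean, mul_zero, sub_zero, hcross]

end Calculus

section Escort

variable {X : Type*} [Fintype X] {p : X → ℝ}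

lemma escort_pos (hp : ∀ x, 0 < p x) (α : ℝ) (x : X) : 0 < escort α p x :=
  div_pos (Real.rpow_pos_of_pos (hp x) α)
    (Finset.sum_pos (fun y _ => Real.rpow_pos_of_pos (hp y) α) ⟨x, Finset.mem_univ x⟩)

lemma sum_escort [Nonempty X] (hp : ∀ x, 0 < p x) (α : ℝ) : ∑ x, escort α p x = 1 := by
  refine (Finset.sum_div _ _ _).symm.trans (div_self ?_)
  exact (Finset.sum_pos (fun y _ => Real.rpow_pos_of_pos (hp y) α) Finset.univ_nonempty).ne'

end Escort

section Simplex

variable {d : ℕ}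

@[simp]
lemma simplexFam_castSucc (θ : Fin d → ℝ) (j : Fin d) : simplexFam d θ j.castSucc = θ j := by
  simp [simplexFam]

@[simp]
lemma simplexFam_last (θ : Fin d → ℝ) : simplexFam d θ (Fin.last d) = 1 - ∑ i, θ i := by
  simp [simplexFam]

lemma sum_simplexFam (θ : Fin d → ℝ) : ∑ x, simplexFam d θ x = 1 := by
  simp [Fin.sum_univ_castSucc]

lemma expct_simplexFam (θ : Fin d → ℝ) (g : Fin (d + 1) → ℝ) :
    expct (simplexFam d θ) g = ∑ j, θ j * g j.castSucc + (1 - ∑ i, θ i) * g (Fin.last d) := by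
  simp [expct, Fin.sum_univ_castSucc]

lemma simplexFam_pos {θ : Fin d → ℝ} (hpos : ∀ i, 0 < θ i) (hsum : ∑ i, θ i < 1)
    (x : Fin (d + 1)) : 0 < simplexFam d θ x := by
  induction x using Fin.lastCases <;> simp [hpos, hsum]

lemma differentiable_simplexFam (x : Fin (d + 1)) :
    Differentiable ℝ (fun t => simplexFam d t x) := by
  induction x using Fin.lastCases <;> simp only [simplexFam_castSucc, simplexFam_last] <;> fun_prop

lemma pderiv_simplexFam_castSucc (θ : Fin d → ℝ) (i j : Fin d) :
    pderiv i (fun t => simplexFam d t j.castSucc) θ = (Pi.single i 1 : Fin d → ℝ) j := by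
  simp [pderiv, (hasFDerivAt_apply j θ).fderiv]

lemma pderiv_simplexFam_last (θ : Fin d → ℝ) (i : Fin d) :
    pderiv i (fun t => simplexFam d t (Fin.last d)) θ = -1 := by
  have hsum := HasFDerivAt.fun_sum fun j (_ : j ∈ Finset.univ) => hasFDerivAt_apply (𝕜 := ℝ) j θ
  simp [pderiv, fderiv_const_sub, hsum.fderiv]

theorem eq_expct_add_dotProduct_pderiv_log_simplexFam {θ : Fin d → ℝ} (hpos : ∀ i, 0 < θ i)
    (hsum : ∑ i, θ i < 1) (g : Fin (d + 1) → ℝ) :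
    g = fun x => expct (simplexFam d θ) g
      + (fun j => θ j * (g j.castSucc - expct (simplexFam d θ) g))
        ⬝ᵥ fun j => pderiv j (fun t => Real.log (simplexFam d t x)) θ := by
  have hlog (j : Fin d) (x : Fin (d + 1)) :
      pderiv j (fun t => Real.log (simplexFam d t x)) θ
        = pderiv j (fun t => simplexFam d t x) θ / simplexFam d θ x :=
    pderiv_log (differentiable_simplexFam x θ) (simplexFam_pos hpos hsum x).ne' j
  set E := expct (simplexFam d θ) g with hE
  funext x
  induction x using Fin.lastCases with
  | last =>
    have hscore (j : Fin d) : pderiv j (fun t => Real.log (simplexFam d t (Fin.last d))) θ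
        = -1 / (1 - ∑ i, θ i) := by
      rw [hlog, pderiv_simplexFam_last, simplexFam_last]
    have hL : 1 - ∑ i, θ i ≠ 0 := (sub_pos.mpr hsum).ne'
    rw [expct_simplexFam] at hE
    simp only [dotProduct, hscore, ← Finset.sum_mul, mul_sub, Finset.sum_sub_distrib]
    field_simp
    linear_combination -hE
  | cast k =>
    have hscore (j : Fin d) : pderiv j (fun t => Real.log (simplexFam d t k.castSucc)) θ
        = (Pi.single j 1 : Fin d → ℝ) k / θ k := by
      rw [hlog, pderiv_simplexFam_castSucc, simplexFam_castSucc]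
    simp only [dotProduct, hscore, Pi.single_apply, ite_div, zero_div, mul_ite, mul_zero,
      Finset.sum_ite_eq, Finset.mem_univ, if_true]
    field_simp [(hpos k).ne']
    ring

end Simplex

theorem variance_eq_norm_differential_simplex_general {d : ℕ} (α : ℝ)
    (hG : ∀ θ : Fin d → ℝ, (∀ i, 0 < θ i) → (∑ i, θ i) < 1 →
      (Galpha α (simplexFam d) θ).PosDef) :
    ∀ θ : Fin d → ℝ, (∀ i, 0 < θ i) → (∑ i, θ i) < 1 →
      ∀ A : Fin (d + 1) → ℝ,
        varE (escort α (simplexFam d θ))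
            (fun x => (simplexFam d θ x / escort α (simplexFam d θ) x)
              * (A x - expct (simplexFam d θ) A))
          = (fun i => pderiv i (fun t => expct (simplexFam d t) A) θ) ⬝ᵥ
              ((Galpha α (simplexFam d) θ)⁻¹).mulVec
                (fun i => pderiv i (fun t => expct (simplexFam d t) A) θ) := by
  intro θ hpos hsum A
  have hp := simplexFam_pos hpos hsum
  -- `Galpha α (simplexFam d) θ` unfolds to the `covMatrix` of the scores under the escort.
  exact varE_eq_dotProduct_covMatrix_inv_mulVec (sum_escort hp α)
    ((Matrix.isUnit_iff_isUnit_det _).mp (hG θ hpos hsum).isUnit)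
    (eq_expct_add_dotProduct_pderiv_log_simplexFam hpos hsum _)
    (covf_pderiv_log_eq_pderiv_expct (fun x => (differentiable_simplexFam x).differentiableAt)
      (.of_forall sum_simplexFam) (fun x => (hp x).ne') (fun x => (escort_pos hp α x).ne') A)

/-- on the full open simplex, the variance of the α-representation of
`A - E[A]` equals the squared norm of the differential of `θ ↦ E_{p_θ}[A]`. -/
theorem variance_eq_norm_differential_simplex {d : ℕ} (α : ℝ) (hα : 0 < α)
    (hG : ∀ θ : Fin d → ℝ, (∀ i, 0 < θ i) → (∑ i, θ i) < 1 →
      (Galpha α (simplexFam d) θ).PosDef) :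
    ∀ θ : Fin d → ℝ, (∀ i, 0 < θ i) → (∑ i, θ i) < 1 →
      ∀ A : Fin (d + 1) → ℝ,
        varE (escort α (simplexFam d θ))
            (fun x => (simplexFam d θ x / escort α (simplexFam d θ) x)
              * (A x - expct (simplexFam d θ) A))
          = (fun i => pderiv i (fun t => expct (simplexFam d t) A) θ) ⬝ᵥ
              ((Galpha α (simplexFam d) θ)⁻¹).mulVec
                (fun i => pderiv i (fun t => expct (simplexFam d t) A) θ) :=
  variance_eq_norm_differential_simplex_general α hG
end
end

section
/- Let X be a finite set, Θ ⊆ ℝ^k open, and θ ↦ p_θ a twice continuously differentiable family of strictly positive probability distributions on X. Let F : (0,∞) → (0,∞) be such that x ↦ F(p_θ(x)) is a strictly positive probability distribution on X for every θ, and suppose the escort model is exponential: log F(p_θ(x)) = c(x) + ∑_{i=1}^k θ_i h_i(x) − ψ(θ) for functions c, h_1, …, h_k : X → ℝ and a twice continuously differentiable ψ : Θ → ℝ. Set η_i(θ) := E_{F(p_θ)}[h_i]. Then: (i) ∂_i ψ(θ) = η_i(θ); (ii) the generalized Fisher matrix satisfies g^{(f,F)}_{ij}(θ) = E_{F(p_θ)}[(h_i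 − η_i(θ))(h_j − η_j(θ))], i.e. G^{(f,F)}(θ) = Cov_{F(p_θ)}[h]; and (iii) ∂_i η_j(θ) = g^{(f,F)}_{ij}(θ). In particular h = (h_1, …, h_k) is an unbiased estimator of η(θ) for the escort model whose covariance matrix equals the generalized Fisher matrix, i.e. it is efficient. -/
open scoped BigOperators Topology Matrix
open Real MeasureTheory

noncomputable section

/-!
On the open set `Θ` the escort distribution is `exp (c + θ ⬝ h - ψ θ)`, and normalization forces
`ψ` to be the log-partition function `log ∑ₓ exp (c x + θ ⬝ h x)`, so `ψ` is differentiable there.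
The score `∂ᵢ log F(p_θ)` is then `hᵢ - ∂ᵢψ`; differentiating `∑ₓ F(p_θ x) = 1` shows that the score
has mean zero, i.e. `∂ᵢψ = ηᵢ`. Hence the generalized Fisher matrix is the covariance of the centred
statistics `hᵢ - ηᵢ`, and differentiating `ηⱼ = ∑ₓ F(p_θ x) hⱼ x` gives the same covariance.
-/

open Filter Finset

section WeightedSums

variable {X : Type*} [Fintype X] {w : X → ℝ}

theorem sum_mul_sub_const (hw : ∑ x, w x = 1) (a : X → ℝ) (s : ℝ) :
    ∑ x, w x * (a x - s) = expct w a - s := by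
  simp only [mul_sub, sum_sub_distrib, ← sum_mul, hw, one_mul, expct]

theorem sum_mul_sub_expct_mul (hw : ∑ x, w x = 1) (a b : X → ℝ) :
    ∑ x, w x * (a x - expct w a) * b x
      = ∑ x, w x * (a x - expct w a) * (b x - expct w b) := by
  have hcentered : ∑ x, w x * (a x - expct w a) = 0 := by
    rw [sum_mul_sub_const hw, sub_self]
  simp only [mul_sub (_ * _), sum_sub_distrib, ← sum_mul, hcentered, zero_mul, sub_zero]

theorem covf_eq_sum_mul_sub_expct (hw : ∑ x, w x = 1) (a b : X → ℝ) :
    covf w a b = ∑ x, w x * (a x - expct w a) * (b x - expct w b) := by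
  rw [← sum_mul_sub_expct_mul hw]
  simp only [covf, expct, mul_sub, sub_mul, sum_sub_distrib, mul_assoc,
    mul_left_comm (w _) (∑ y, w y * a y), ← mul_sum]

end WeightedSums

section PartialDerivatives

variable {k : ℕ} {f g : (Fin k → ℝ) → ℝ} {θ : Fin k → ℝ}

theorem pderiv_congr (hfg : f =ᶠ[𝓝 θ] g) (i : Fin k) : pderiv i f θ = pderiv i g θ := by
  rw [pderiv, pderiv, hfg.fderiv_eq]

theorem pderiv_const (b : ℝ) (i : Fin k) : pderiv i (fun _ => b) θ = 0 := by
  simp [pderiv]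

theorem pderiv_exp (hg : DifferentiableAt ℝ g θ) (i : Fin k) :
    pderiv i (fun t => exp (g t)) θ = exp (g θ) * pderiv i g θ := by
  simp [pderiv, hg.hasFDerivAt.exp.fderiv]

theorem pderiv_sum {ι : Type*} {s : Finset ι} {f : ι → (Fin k → ℝ) → ℝ}
    (hf : ∀ x ∈ s, DifferentiableAt ℝ (f x) θ) (i : Fin k) :
    pderiv i (fun t => ∑ x ∈ s, f x t) θ = ∑ x ∈ s, pderiv i (f x) θ := by
  simp [pderiv, fderiv_fun_sum hf]

theorem pderiv_mul_const (hf : DifferentiableAt ℝ f θ) (b : ℝ) (i : Fin k) :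
    pderiv i (fun t => f t * b) θ = pderiv i f θ * b := by
  rw [pderiv, pderiv, fderiv_mul_const hf, smul_apply, smul_eq_mul, mul_comm]

theorem pderiv_sum_mul (a : Fin k → ℝ) (i : Fin k) :
    pderiv i (fun t => ∑ j, t j * a j) θ = a i := by
  have hlin : HasFDerivAt (fun t : Fin k → ℝ => ∑ j, t j * a j)
      (∑ j, a j • ContinuousLinearMap.proj (R := ℝ) (φ := fun _ : Fin k => ℝ) j) θ :=
    HasFDerivAt.fun_sum fun j _ => by
      simpa only [mul_comm _ (a j)] using (hasFDerivAt_apply j θ).const_mul (a j)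
  simp [pderiv, hlin.fderiv, Pi.single_apply]

theorem pderiv_const_add_sum_mul_sub (b : ℝ) (a : Fin k → ℝ) (hf : DifferentiableAt ℝ f θ)
    (i : Fin k) : pderiv i (fun t => b + ∑ j, t j * a j - f t) θ = a i - pderiv i f θ := by
  have hlin : DifferentiableAt ℝ (fun t : Fin k → ℝ => ∑ j, t j * a j) θ := by fun_prop
  rw [pderiv, fderiv_fun_sub (hlin.const_add b) hf, fderiv_const_add]
  exact congrArg (· - pderiv i f θ) (pderiv_sum_mul a i)

end PartialDerivatives

section ExponentialFamily

variable {X : Type*} {k : ℕ} {c : X → ℝ} {h : Fin k → X → ℝ} {ψ : (Fin k → ℝ) → ℝ}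
  {q : (Fin k → ℝ) → X → ℝ} {θ : Fin k → ℝ}

theorem differentiableAt_expFamily
    (hq : ∀ᶠ t in 𝓝 θ, ∀ x, q t x = exp (c x + ∑ i, t i * h i x - ψ t))
    (hψ : DifferentiableAt ℝ ψ θ) (x : X) : DifferentiableAt ℝ (fun t => q t x) θ :=
  DifferentiableAt.congr_of_eventuallyEq (by fun_prop) (hq.mono fun t ht => ht x)

theorem pderiv_log_expFamily
    (hq : ∀ᶠ t in 𝓝 θ, ∀ x, q t x = exp (c x + ∑ i, t i * h i x - ψ t))
    (hψ : DifferentiableAt ℝ ψ θ) (x : X) (i : Fin k) :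
    pderiv i (fun t => log (q t x)) θ = h i x - pderiv i ψ θ := by
  rw [pderiv_congr (hq.mono fun t ht => by rw [ht x, log_exp]),
    pderiv_const_add_sum_mul_sub _ _ hψ]

theorem pderiv_expFamily
    (hq : ∀ᶠ t in 𝓝 θ, ∀ x, q t x = exp (c x + ∑ i, t i * h i x - ψ t))
    (hψ : DifferentiableAt ℝ ψ θ) (x : X) (i : Fin k) :
    pderiv i (fun t => q t x) θ = q θ x * (h i x - pderiv i ψ θ) := by
  rw [pderiv_congr (hq.mono fun t ht => ht x), pderiv_exp (by fun_prop),
    pderiv_const_add_sum_mul_sub _ _ hψ, hq.self_of_nhds x]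

variable [Fintype X]


def logPartition (c : X → ℝ) (h : Fin k → X → ℝ) (t : Fin k → ℝ) : ℝ :=
  log (∑ x, exp (c x + ∑ i, t i * h i x))

theorem eq_logPartition_of_sum_exp_sub_eq_one {t : Fin k → ℝ} {s : ℝ}
    (hs : ∑ x, exp (c x + ∑ i, t i * h i x - s) = 1) : s = logPartition c h t := by
  simp only [exp_sub, ← sum_div, div_eq_one_iff_eq (exp_ne_zero s)] at hs
  rw [logPartition, hs, log_exp]

theorem differentiable_logPartition [Nonempty X] (c : X → ℝ) (h : Fin k → X → ℝ) :
    Differentiable ℝ (logPartition c h) := fun t =>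
  DifferentiableAt.log (by fun_prop) (sum_pos (fun x _ => exp_pos _) univ_nonempty).ne'

theorem differentiableAt_potential_of_expFamily
    (hq : ∀ᶠ t in 𝓝 θ, ∀ x, q t x = exp (c x + ∑ i, t i * h i x - ψ t))
    (hnorm : ∀ᶠ t in 𝓝 θ, ∑ x, q t x = 1) : DifferentiableAt ℝ ψ θ := by
  have : Nonempty X := by
    by_contra hX
    simpa [not_nonempty_iff.mp hX] using hnorm.self_of_nhds
  refine (differentiable_logPartition c h θ).congr_of_eventuallyEq ?_
  filter_upwards [hq, hnorm] with t hqt hnt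
  exact eq_logPartition_of_sum_exp_sub_eq_one (by simpa only [hqt] using hnt)

theorem pderiv_potential_of_expFamily
    (hq : ∀ᶠ t in 𝓝 θ, ∀ x, q t x = exp (c x + ∑ i, t i * h i x - ψ t))
    (hnorm : ∀ᶠ t in 𝓝 θ, ∑ x, q t x = 1) (i : Fin k) :
    pderiv i ψ θ = expct (q θ) (h i) := by
  have hψ := differentiableAt_potential_of_expFamily hq hnorm
  have hzero : pderiv i (fun t => ∑ x, q t x) θ = 0 :=
    (pderiv_congr hnorm i).trans (pderiv_const 1 i)
  rw [pderiv_sum (fun x _ => differentiableAt_expFamily hq hψ x)] at hzero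
  simp only [pderiv_expFamily hq hψ, sum_mul_sub_const hnorm.self_of_nhds] at hzero
  linarith

theorem pderiv_log_eq_sub_expct_of_expFamily
    (hq : ∀ᶠ t in 𝓝 θ, ∀ x, q t x = exp (c x + ∑ i, t i * h i x - ψ t))
    (hnorm : ∀ᶠ t in 𝓝 θ, ∑ x, q t x = 1) (x : X) (i : Fin k) :
    pderiv i (fun t => log (q t x)) θ = h i x - expct (q θ) (h i) := by
  rw [pderiv_log_expFamily hq (differentiableAt_potential_of_expFamily hq hnorm),
    pderiv_potential_of_expFamily hq hnorm]

theorem pderiv_expct_of_expFamily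
    (hq : ∀ᶠ t in 𝓝 θ, ∀ x, q t x = exp (c x + ∑ i, t i * h i x - ψ t))
    (hnorm : ∀ᶠ t in 𝓝 θ, ∑ x, q t x = 1) (i j : Fin k) :
    pderiv i (fun t => expct (q t) (h j)) θ = covf (q θ) (h i) (h j) := by
  have hψ := differentiableAt_potential_of_expFamily hq hnorm
  have hw := hnorm.self_of_nhds
  rw [covf_eq_sum_mul_sub_expct hw, ← sum_mul_sub_expct_mul hw]
  simp only [expct, pderiv_sum (fun x _ => (differentiableAt_expFamily hq hψ x).mul_const _),
    pderiv_mul_const (differentiableAt_expFamily hq hψ _), pderiv_expFamily hq hψ,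
    pderiv_potential_of_expFamily hq hnorm]

end ExponentialFamily

theorem exponential_escort_efficient_general {X : Type*} [Fintype X] {k : ℕ}
    (Θ : Set (Fin k → ℝ)) (hΘ : IsOpen Θ)
    (p : (Fin k → ℝ) → X → ℝ)
    (F : ℝ → ℝ)
    (hFpos : ∀ θ ∈ Θ, ∀ x, 0 < F (p θ x))
    (hFsum : ∀ θ ∈ Θ, ∑ x, F (p θ x) = 1)
    (c : X → ℝ) (h : Fin k → X → ℝ) (ψ : (Fin k → ℝ) → ℝ)
    (hexp : ∀ θ ∈ Θ, ∀ x,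
      Real.log (F (p θ x)) = c x + (∑ i, θ i * h i x) - ψ θ) :
    ∀ θ ∈ Θ,
      (∀ i, pderiv i ψ θ = ∑ x, F (p θ x) * h i x) ∧
      (∀ i j, GFF F p θ i j
        = ∑ x, F (p θ x) * (h i x - ∑ y, F (p θ y) * h i y)
            * (h j x - ∑ y, F (p θ y) * h j y)) ∧
      (∀ i j, pderiv i (fun t => ∑ x, F (p t x) * h j x) θ = GFF F p θ i j) ∧
      covMatrix (fun x => F (p θ x)) (fun x r => h r x) = GFF F p θ := by
  intro θ hθ
  have hq : ∀ᶠ t in 𝓝 θ, ∀ x, F (p t x) = exp (c x + ∑ i, t i * h i x - ψ t) :=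
    eventually_of_mem (hΘ.mem_nhds hθ) fun t ht x => by rw [← hexp t ht x, exp_log (hFpos t ht x)]
  have hnorm : ∀ᶠ t in 𝓝 θ, ∑ x, F (p t x) = 1 := eventually_of_mem (hΘ.mem_nhds hθ) hFsum
  have hw := hnorm.self_of_nhds
  have hfisher : ∀ i j, GFF F p θ i j = ∑ x, F (p θ x)
      * (h i x - expct (fun y => F (p θ y)) (h i)) * (h j x - expct (fun y => F (p θ y)) (h j)) := by
    intro i j
    simp only [GFF, Matrix.of_apply, pderiv_log_eq_sub_expct_of_expFamily hq hnorm]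
  refine ⟨pderiv_potential_of_expFamily hq hnorm, hfisher, fun i j => ?_, ?_⟩
  · rw [hfisher, ← covf_eq_sum_mul_sub_expct hw]
    exact pderiv_expct_of_expFamily hq hnorm i j
  · ext i j
    rw [hfisher]
    exact covf_eq_sum_mul_sub_expct hw _ _

/-- for an exponential escort model, `h` is an efficient (unbiased,
covariance = generalized Fisher matrix) estimator of the dual parameter `η`. -/
theorem exponential_escort_efficient {X : Type*} [Fintype X] {k : ℕ}
    (Θ : Set (Fin k → ℝ)) (hΘ : IsOpen Θ)
    (p : (Fin k → ℝ) → X → ℝ)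
    (hsmooth : ∀ x, ContDiffOn ℝ 2 (fun θ => p θ x) Θ)
    (hpos : ∀ θ ∈ Θ, ∀ x, 0 < p θ x)
    (hsum : ∀ θ ∈ Θ, ∑ x, p θ x = 1)
    (F : ℝ → ℝ)
    (hFpos : ∀ θ ∈ Θ, ∀ x, 0 < F (p θ x))
    (hFsum : ∀ θ ∈ Θ, ∑ x, F (p θ x) = 1)
    (c : X → ℝ) (h : Fin k → X → ℝ) (ψ : (Fin k → ℝ) → ℝ)
    (hψ : ContDiffOn ℝ 2 ψ Θ)
    (hexp : ∀ θ ∈ Θ, ∀ x,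
      Real.log (F (p θ x)) = c x + (∑ i, θ i * h i x) - ψ θ) :
    ∀ θ ∈ Θ,
      (∀ i, pderiv i ψ θ = ∑ x, F (p θ x) * h i x) ∧
      (∀ i j, GFF F p θ i j
        = ∑ x, F (p θ x) * (h i x - ∑ y, F (p θ y) * h i y)
            * (h j x - ∑ y, F (p θ y) * h j y)) ∧
      (∀ i j, pderiv i (fun t => ∑ x, F (p t x) * h j x) θ = GFF F p θ i j) ∧
      covMatrix (fun x => F (p θ x)) (fun x r => h r x) = GFF F p θ :=
  exponential_escort_efficient_general Θ hΘ p F hFpos hFsum c h ψ hexp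
end
end

section
/- Let X be a finite set, Θ ⊆ ℝ^k open, θ ↦ p_θ a twice continuously differentiable family of strictly positive probability distributions on X, and λ : Θ → (0,∞) twice continuously differentiable. Define the positive measures p̃_θ(x) := λ(θ) p_θ(x) and the generalized KL-divergence I(p̃ ∥ q̃) := ∑_x p̃(x) log(p̃(x)/q̃(x)) − ∑_x p̃(x) + ∑_x q̃(x). Then for all i, j and all θ ∈ Θ, −(∂/∂θ'_j)(∂/∂θ_i) I(p̃_θ ∥ p̃_{θ'}) evaluated at θ' = θ equals λ(θ) [ g^{(e)}_{ij}(θ) + ∂_i log λ(θ) · ∂_j log λ(θ) ], where g^{(e)}_{ij}(θ) := E_{p_θ}[∂_i log p_θ(X) ∂_j log p_θ(X)] is the Fisher information matrix. -/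
open scoped BigOperators Topology Matrix
open Real MeasureTheory

noncomputable section

/-!
Write `q_t = λ(t) p_t`. Differentiating `I(q_t ∥ q_θ')` in `t` at `θ` gives
`∑ ∂_i q · log (q_θ / q_θ')`, the linear terms of the generalized divergence cancelling, and
differentiating this in `θ'` at `θ` gives `-∑ ∂_i q ∂_j q / q`. With `∂q = λ ∂p + p ∂λ` the cross
terms vanish because normalization forces `∑ ∂p = 0`, which leaves `λ (g^{(e)} + ∂_i log λ ∂_j log λ)`.
-/

open Filter

section genKL

variable {E : Type*} [NormedAddCommGroup E] [NormedSpace ℝ E] {X : Type*} [Fintype X]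
  {q : E → X → ℝ} {q' : X → E →L[ℝ] ℝ} {θ : E}

theorem hasFDerivAt_genKL_left {r : X → ℝ} (hq : ∀ x, HasFDerivAt (fun t => q t x) (q' x) θ)
    (hq0 : ∀ x, q θ x ≠ 0) (hr : ∀ x, r x ≠ 0) :
    HasFDerivAt (fun t => genKL (q t) r) (∑ x, Real.log (q θ x / r x) • q' x) θ := by
  have hlog : ∀ x, HasFDerivAt (fun t => Real.log (q t x / r x)) ((q θ x)⁻¹ • q' x) θ := by
    intro x
    have hdiv : HasFDerivAt (fun t => q t x / r x) ((r x)⁻¹ • q' x) θ := by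
      simpa only [div_eq_mul_inv] using (hq x).mul_const (r x)⁻¹
    convert hdiv.log (div_ne_zero (hq0 x) (hr x)) using 1
    rw [smul_smul, ← mul_inv, div_mul_cancel₀ _ (hr x)]
  have hexpand : HasFDerivAt
      (fun t => ∑ x, q t x * Real.log (q t x / r x) - ∑ x, q t x + ∑ x, r x)
      (∑ x, (q θ x • (q θ x)⁻¹ • q' x + Real.log (q θ x / r x) • q' x) - ∑ x, q' x) θ :=
    ((HasFDerivAt.fun_sum fun x _ => (hq x).mul (hlog x)).sub
      (HasFDerivAt.fun_sum fun x _ => hq x)).add_const _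
  refine hexpand.congr_fderiv ?_
  simp only [smul_smul, mul_inv_cancel₀ (hq0 _), one_smul, Finset.sum_add_distrib,
    add_sub_cancel_left]

theorem fderiv_fderiv_genKL (hq : ∀ x, HasFDerivAt (fun t => q t x) (q' x) θ)
    (hq0 : ∀ x, q θ x ≠ 0) (u v : E) :
    fderiv ℝ (fun θ' => fderiv ℝ (fun t => genKL (q t) (q θ')) θ u) θ v
      = -∑ x, q' x u * q' x v / q θ x := by
  have hnear : ∀ᶠ θ' in 𝓝 θ, ∀ x, q θ' x ≠ 0 :=
    eventually_all.2 fun x => (hq x).continuousAt.eventually_ne (hq0 x)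
  have hfirst : (fun θ' => fderiv ℝ (fun t => genKL (q t) (q θ')) θ u)
      =ᶠ[𝓝 θ] fun θ' => ∑ x, q' x u * (Real.log (q θ x) - Real.log (q θ' x)) := by
    filter_upwards [hnear] with θ' hθ'
    rw [(hasFDerivAt_genKL_left hq hq0 hθ').fderiv]
    simp [Real.log_div (hq0 _) (hθ' _), mul_comm]
  have hsecond : HasFDerivAt (fun θ' => ∑ x, q' x u * (Real.log (q θ x) - Real.log (q θ' x)))
      (∑ x, q' x u • -((q θ x)⁻¹ • q' x)) θ :=
    HasFDerivAt.fun_sum fun x _ => (((hq x).log (hq0 x)).const_sub _).const_mul _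
  rw [hfirst.fderiv_eq, hsecond.fderiv]
  simp [div_eq_mul_inv, mul_comm, mul_left_comm]

theorem sum_eq_zero_of_hasFDerivAt_of_eventually_sum_eq {c : ℝ}
    (hq : ∀ x, HasFDerivAt (fun t => q t x) (q' x) θ) (hc : ∀ᶠ t in 𝓝 θ, ∑ x, q t x = c) :
    ∑ x, q' x = 0 :=
  (HasFDerivAt.fun_sum fun x _ => hq x).unique ((hasFDerivAt_const c θ).congr_of_eventuallyEq hc)

end genKL

theorem pderiv_log_eq {k : ℕ} {f : (Fin k → ℝ) → ℝ} {f' : (Fin k → ℝ) →L[ℝ] ℝ}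
    {θ : Fin k → ℝ} (hf : HasFDerivAt f f' θ) (h0 : f θ ≠ 0) (i : Fin k) :
    pderiv i (fun t => Real.log (f t)) θ = f' (Pi.single i 1) / f θ := by
  rw [pderiv, (hf.log h0).fderiv]
  simp [div_eq_inv_mul]

theorem sum_fisher_of_scaled {X : Type*} [Fintype X] {l b d : ℝ} {p a c : X → ℝ}
    (hl : l ≠ 0) (hp : ∀ x, p x ≠ 0) (hp1 : ∑ x, p x = 1) (ha : ∑ x, a x = 0)
    (hc : ∑ x, c x = 0) :
    ∑ x, (l * a x + p x * b) * (l * c x + p x * d) / (l * p x)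
      = l * (∑ x, p x * (a x / p x) * (c x / p x) + b / l * (d / l)) := by
  have hterm : ∀ x, (l * a x + p x * b) * (l * c x + p x * d) / (l * p x)
      = l * (p x * (a x / p x) * (c x / p x)) + (d * a x + b * c x) + b * d / l * p x := by
    intro x
    field_simp [hp x]
    ring
  simp only [hterm, Finset.sum_add_distrib, ← Finset.mul_sum, ha, hc, hp1]
  field_simp
  ring

/-- the Eguchi metric of the generalized KL-divergence between the
unnormalized measures `p̃_θ = λ(θ)p_θ` is `λ(θ)[G^{(e)}(θ) + J^λ(θ)]`. -/
theorem eguchi_metric_bayesian_KL {X : Type*} [Fintype X] {k : ℕ}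
    (Θ : Set (Fin k → ℝ)) (hΘ : IsOpen Θ)
    (p : (Fin k → ℝ) → X → ℝ)
    (hsmooth : ∀ x, ContDiffOn ℝ 2 (fun θ => p θ x) Θ)
    (hpos : ∀ θ ∈ Θ, ∀ x, 0 < p θ x)
    (hsum : ∀ θ ∈ Θ, ∑ x, p θ x = 1)
    (lam : (Fin k → ℝ) → ℝ) (hlams : ContDiffOn ℝ 2 lam Θ)
    (hlampos : ∀ θ ∈ Θ, 0 < lam θ) :
    ∀ θ ∈ Θ, ∀ i j : Fin k,
      -(pderiv j (fun θ' => pderiv i (fun t =>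
            genKL (fun x => lam t * p t x) (fun x => lam θ' * p θ' x)) θ) θ)
        = lam θ * (GeMat p θ i j
            + pderiv i (fun t => Real.log (lam t)) θ
              * pderiv j (fun t => Real.log (lam t)) θ) := by
  intro θ hθ i j
  have hΘθ : Θ ∈ 𝓝 θ := hΘ.mem_nhds hθ
  have hp : ∀ x, HasFDerivAt (fun t => p t x) (fderiv ℝ (fun t => p t x) θ) θ := fun x =>
    (((hsmooth x).contDiffAt hΘθ).differentiableAt two_ne_zero).hasFDerivAt
  have hl : HasFDerivAt lam (fderiv ℝ lam θ) θ :=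
    ((hlams.contDiffAt hΘθ).differentiableAt two_ne_zero).hasFDerivAt
  have hp0 : ∀ x, p θ x ≠ 0 := fun x => (hpos θ hθ x).ne'
  have hl0 : lam θ ≠ 0 := (hlampos θ hθ).ne'
  have hdp : ∑ x, fderiv ℝ (fun t => p t x) θ = 0 :=
    sum_eq_zero_of_hasFDerivAt_of_eventually_sum_eq hp (eventually_of_mem hΘθ hsum)
  refine (congrArg Neg.neg (fderiv_fderiv_genKL (q := fun t x => lam t * p t x)
    (fun x => hl.mul (hp x)) (fun x => mul_ne_zero hl0 (hp0 x)) _ _)).trans ?_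
  rw [neg_neg]
  simp only [GeMat, Matrix.of_apply, pderiv_log_eq hl hl0, pderiv_log_eq (hp _) (hp0 _),
    add_apply, smul_apply, smul_eq_mul]
  exact sum_fisher_of_scaled hl0 hp0 (hsum θ hθ)
    (by simpa using congrArg (· (Pi.single i 1)) hdp)
    (by simpa using congrArg (· (Pi.single j 1)) hdp)
end
end

section
/- (Barankin bound, scalar case) Let X be a finite set, Θ ⊆ ℝ open, and θ ↦ p_θ a family of strictly positive probability distributions on X. Let θ̂ : X → ℝ be an unbiased estimator of θ, i.e. E_{p_θ}[θ̂] = θ for all θ ∈ Θ. Then for every θ ∈ Θ, every n ∈ ℕ, all a_1, …, a_n ∈ ℝ, and all θ^{(1)}, …, θ^{(n)} ∈ Θ such that ∑_{x∈X} (∑_{l=1}^n a_l p_{θ^{(l)}}(x)/p_θ(x))² p_θ(x) > 0, it holds that Var_{p_θ}[θ̂] ≥ (∑_{l=1}^n a_l (θ^{(l)} − θ))² / ∑_{x∈X} (∑_{l=1}^n a_l p_{θ^{(l)}}(x)/p_θ(x))² p_θ(x). -/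
open scoped BigOperators Topology Matrix
open Real MeasureTheory

noncomputable section

/-- the Barankin bound (scalar case). -/
theorem barankin_bound {X : Type*} [Fintype X]
    (Θ : Set ℝ) (hΘ : IsOpen Θ)
    (p : ℝ → X → ℝ)
    (hpos : ∀ θ ∈ Θ, ∀ x, 0 < p θ x)
    (hsum : ∀ θ ∈ Θ, ∑ x, p θ x = 1)
    (est : X → ℝ)
    (hunb : ∀ θ ∈ Θ, expct (p θ) est = θ) :
    ∀ θ ∈ Θ, ∀ n : ℕ, ∀ a : Fin n → ℝ, ∀ θl : Fin n → ℝ,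
      (∀ l, θl l ∈ Θ) →
      0 < (∑ x, (∑ l, a l * (p (θl l) x / p θ x)) ^ 2 * p θ x) →
      varE (p θ) est ≥ (∑ l, a l * (θl l - θ)) ^ 2 /
        ∑ x, (∑ l, a l * (p (θl l) x / p θ x)) ^ 2 * p θ x := by
  intro θ hθ n a θl hθl hD
  set T : X → ℝ := fun x => ∑ l, a l * (p (θl l) x / p θ x) with hT
  have hE : expct (p θ) est = θ := hunb θ hθ
  have key : ∑ x, p θ x * (est x - θ) * T x = ∑ l, a l * (θl l - θ) := by
    simp only [hT, Finset.mul_sum]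
    rw [Finset.sum_comm]
    refine Finset.sum_congr rfl fun l _ => ?_
    have hx : ∀ x, p θ x * (est x - θ) * (a l * (p (θl l) x / p θ x))
        = a l * (p (θl l) x * est x) - a l * (θ * p (θl l) x) := by
      intro x
      have hp := (hpos θ hθ x).ne'
      field_simp
    rw [Finset.sum_congr rfl fun x _ => hx x, Finset.sum_sub_distrib,
      ← Finset.mul_sum, ← Finset.mul_sum, ← Finset.mul_sum]
    have h1 : ∑ x, p (θl l) x * est x = θl l := hunb (θl l) (hθl l)
    rw [h1, hsum (θl l) (hθl l)]
    ring
  have hcs : (∑ x, p θ x * (est x - θ) * T x) ^ 2 ≤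
      (∑ x, p θ x * (est x - θ) ^ 2) * (∑ x, T x ^ 2 * p θ x) := by
    calc (∑ x, p θ x * (est x - θ) * T x) ^ 2
        = (∑ x, (Real.sqrt (p θ x) * (est x - θ)) * (Real.sqrt (p θ x) * T x)) ^ 2 := by
          refine congrArg (· ^ 2) (Finset.sum_congr rfl fun x _ => ?_)
          rw [show (Real.sqrt (p θ x) * (est x - θ)) * (Real.sqrt (p θ x) * T x)
              = Real.sqrt (p θ x) * Real.sqrt (p θ x) * (est x - θ) * T x by ring,
            Real.mul_self_sqrt (hpos θ hθ x).le]
      _ ≤ (∑ x, (Real.sqrt (p θ x) * (est x - θ)) ^ 2) *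
            (∑ x, (Real.sqrt (p θ x) * T x) ^ 2) :=
          Finset.sum_mul_sq_le_sq_mul_sq Finset.univ _ _
      _ = (∑ x, p θ x * (est x - θ) ^ 2) * (∑ x, T x ^ 2 * p θ x) := by
          congr 1 <;> refine Finset.sum_congr rfl fun x _ => ?_ <;>
            rw [mul_pow, Real.sq_sqrt (hpos θ hθ x).le] <;> ring
  have hvar : varE (p θ) est = ∑ x, p θ x * (est x - θ) ^ 2 := by
    simp [varE, hE]
  rw [ge_iff_le, div_le_iff₀ hD, ← key, hvar]
  exact hcs
end
end
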